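/- arXiv:1609.09356 — 8 statements merged into one kernel-verified Lean document; each statement's English description precedes it below -/
import Mathlib

section
/- For an odd prime p, the number of Diophantine pairs in F_p (i.e., 2-element subsets {a,b} of nonzero elements of F_p such that ab+1 is a square in F_p, where 0 counts as a square) equals (p-1)(p-2)/4 if p ≡ 1 (mod 4), and (p^2-3p+4)/4 if p ≡ 3 (mod 4). -/
open Finset
open scoped Classical

section Aux

variable {p : ℕ} [Fact p.Prime]

private lemma aux_two_ne_zero (hodd : p % 2 = 1) : (2 : ZMod p) ≠ 0 := by
  have hp : p.Prime := Fact.out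
  intro h
  have h2 : ((2 : ℕ) : ZMod p) = 0 := by exact_mod_cast h
  have := (ZMod.natCast_eq_zero_iff 2 p).mp h2
  have := Nat.le_of_dvd (by norm_num) this
  have := hp.two_le
  omega

private lemma aux_nonzero_card : (univ.filter fun a : ZMod p => a ≠ 0).card = p - 1 := by
  rw [filter_ne', card_erase_of_mem (mem_univ _), card_univ, ZMod.card]

private lemma aux_sq_fiber (hodd : p % 2 = 1) {r : ZMod p} (hr : r ≠ 0) :
    (univ.filter fun x : ZMod p => x * x = r * r).card = 2 := by
  have hrr : r ≠ -r := by
    intro h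
    have h2 : (2 : ZMod p) * r = 0 := by rw [two_mul]; exact add_eq_zero_iff_eq_neg.mpr h
    rcases mul_eq_zero.mp h2 with h' | h'
    · exact aux_two_ne_zero hodd h'
    · exact hr h'
  have : (univ.filter fun x : ZMod p => x * x = r * r) = {r, -r} := by
    ext x
    simp [mul_self_eq_mul_self_iff]
  rw [this, card_pair hrr]

private lemma aux_sq_count (hodd : p % 2 = 1) :
    2 * (univ.filter fun y : ZMod p => y ≠ 0 ∧ IsSquare y).card = p - 1 := by
  have key : p - 1 = ∑ y ∈ univ.filter fun y : ZMod p => y ≠ 0 ∧ IsSquare y,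
      ((univ.filter fun a : ZMod p => a ≠ 0).filter fun x => x * x = y).card := by
    rw [← aux_nonzero_card (p := p)]
    exact card_eq_sum_card_fiberwise (fun x hx => by
      simp only [mem_coe, mem_filter, mem_univ, true_and] at hx ⊢
      exact ⟨mul_ne_zero hx hx, ⟨x, rfl⟩⟩)
  have h2 : ∀ y ∈ univ.filter fun y : ZMod p => y ≠ 0 ∧ IsSquare y,
      ((univ.filter fun a : ZMod p => a ≠ 0).filter fun x => x * x = y).card = 2 := by
    intro y hy
    simp only [mem_filter, mem_univ, true_and] at hy
    obtain ⟨hy0, r, hr⟩ := hy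
    have hr0 : r ≠ 0 := by rintro rfl; exact hy0 (by rw [hr, mul_zero])
    have e : ((univ.filter fun a : ZMod p => a ≠ 0).filter fun x => x * x = y)
        = univ.filter fun x : ZMod p => x * x = r * r := by
      ext x
      simp only [mem_filter, mem_univ, true_and, hr]
      constructor
      · tauto
      · intro h
        refine ⟨fun h0 => hr0 ?_, h⟩
        rw [h0, zero_mul] at h
        exact mul_self_eq_zero.mp h.symm
    rw [e, aux_sq_fiber hodd hr0]
  rw [key, Finset.sum_congr rfl h2, Finset.sum_const, smul_eq_mul, mul_comm]

private lemma aux_row_count (hodd : p % 2 = 1) {a : ZMod p} (ha : a ≠ 0) :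
    (univ.filter fun b : ZMod p => b ≠ 0 ∧ IsSquare (a * b + 1)).card
      = (univ.filter fun y : ZMod p => y ≠ 0 ∧ IsSquare y).card := by
  have step1 : (univ.filter fun b : ZMod p => b ≠ 0 ∧ IsSquare (a * b + 1)).card
      = (univ.filter fun y : ZMod p => y ≠ 1 ∧ IsSquare y).card := by
    apply card_nbij' (fun b => a * b + 1) (fun y => (y - 1) * a⁻¹)
    · intro b hb
      simp only [mem_coe, mem_filter, mem_univ, true_and] at hb ⊢
      refine ⟨fun h => hb.1 ?_, hb.2⟩
      have : a * b = 0 := by linear_combination h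
      rcases mul_eq_zero.mp this with h' | h'
      · exact absurd h' ha
      · exact h'
    · intro y hy
      simp only [mem_coe, mem_filter, mem_univ, true_and] at hy ⊢
      have hy1 : y - 1 ≠ 0 := sub_ne_zero.mpr hy.1
      have key : a * ((y - 1) * a⁻¹) + 1 = y := by field_simp; ring
      exact ⟨mul_ne_zero hy1 (inv_ne_zero ha), by rw [key]; exact hy.2⟩
    · intro b hb; field_simp; ring
    · intro y hy; field_simp; ring
  rw [step1]
  have e1 : (univ.filter fun y : ZMod p => y ≠ 1 ∧ IsSquare y)
      = (univ.filter fun y : ZMod p => IsSquare y).erase 1 := by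
    ext y; simp [mem_erase, and_comm]
  have e2 : (univ.filter fun y : ZMod p => y ≠ 0 ∧ IsSquare y)
      = (univ.filter fun y : ZMod p => IsSquare y).erase 0 := by
    ext y; simp [mem_erase, and_comm]
  rw [e1, e2, card_erase_of_mem (by simp [IsSquare.one]),
    card_erase_of_mem (by simp)]

private lemma aux_hyp_card (hodd : p % 2 = 1) :
    (univ.filter fun x : ZMod p × ZMod p => x.2 * x.2 - x.1 * x.1 = 1).card = p - 1 := by
  have h2 : (2 : ZMod p) ≠ 0 := aux_two_ne_zero hodd
  rw [← aux_nonzero_card (p := p)]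
  symm
  apply card_nbij' (fun t => ((t - t⁻¹) / 2, (t + t⁻¹) / 2)) (fun x => x.2 + x.1)
  · intro t ht
    simp only [mem_coe, mem_filter, mem_univ, true_and] at ht ⊢
    field_simp
    ring
  · intro x hx
    simp only [mem_coe, mem_filter, mem_univ, true_and] at hx ⊢
    intro h
    rw [show x.2 = -x.1 by linear_combination h] at hx
    simp at hx
  · intro t ht
    simp only [mem_coe, mem_filter, mem_univ, true_and] at ht
    field_simp
    ring
  · intro x hx
    simp only [mem_coe, mem_filter, mem_univ, true_and] at hx
    have hinv : (x.2 + x.1)⁻¹ = x.2 - x.1 := by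
      refine inv_eq_of_mul_eq_one_right ?_
      linear_combination hx
    ext
    · show (x.2 + x.1 - (x.2 + x.1)⁻¹) / 2 = x.1
      rw [hinv]; field_simp; ring
    · show (x.2 + x.1 + (x.2 + x.1)⁻¹) / 2 = x.2
      rw [hinv]; field_simp; ring

private lemma aux_hyp_split (hodd : p % 2 = 1) :
    (univ.filter fun a : ZMod p => a * a + 1 = 0).card
      + 2 * (univ.filter fun a : ZMod p => a * a + 1 ≠ 0 ∧ IsSquare (a * a + 1)).card
      = p - 1 := by
  have key : p - 1 = ∑ a ∈ (univ : Finset (ZMod p)),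
      ((univ.filter fun x : ZMod p × ZMod p => x.2 * x.2 - x.1 * x.1 = 1).filter
        fun x => x.1 = a).card := by
    rw [← aux_hyp_card hodd]
    exact card_eq_sum_card_fiberwise (fun x _ => mem_univ _)
  have hfib : ∀ a : ZMod p,
      ((univ.filter fun x : ZMod p × ZMod p => x.2 * x.2 - x.1 * x.1 = 1).filter
        fun x => x.1 = a).card
      = (univ.filter fun c : ZMod p => c * c = a * a + 1).card := by
    intro a
    apply card_nbij' (fun x => x.2) (fun c => (a, c))
    · intro x hx
      simp only [mem_coe, mem_filter, mem_univ, true_and] at hx ⊢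
      rw [← hx.2]
      linear_combination hx.1
    · intro c hc
      simp only [mem_coe, mem_filter, mem_univ, true_and] at hc
      refine mem_filter.mpr ⟨mem_filter.mpr ⟨mem_univ _, ?_⟩, rfl⟩
      show c * c - a * a = 1
      linear_combination hc
    · intro x hx
      simp only [mem_coe, mem_filter, mem_univ, true_and] at hx
      rw [← hx.2]
    · intro c _; rfl
  have hval : ∀ a : ZMod p, (univ.filter fun c : ZMod p => c * c = a * a + 1).card
      = if a * a + 1 = 0 then 1 else (if IsSquare (a * a + 1) then 2 else 0) := by
    intro a
    by_cases h0 : a * a + 1 = 0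
    · rw [if_pos h0]
      have : (univ.filter fun c : ZMod p => c * c = a * a + 1) = {0} := by
        ext c; simp [h0, mul_self_eq_zero]
      rw [this, card_singleton]
    · rw [if_neg h0]
      by_cases hs : IsSquare (a * a + 1)
      · rw [if_pos hs]
        obtain ⟨r, hr⟩ := hs
        have hr0 : r ≠ 0 := by rintro rfl; rw [mul_zero] at hr; exact h0 hr
        have : (univ.filter fun c : ZMod p => c * c = a * a + 1)
            = univ.filter fun c : ZMod p => c * c = r * r := by
          ext c; simp [hr]
        rw [this, aux_sq_fiber hodd hr0]
      · rw [if_neg hs]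
        rw [filter_eq_empty_iff.mpr, card_empty]
        intro c _
        exact fun h => hs ⟨c, h.symm⟩
  have key2 : p - 1 = ∑ a : ZMod p,
      (if a * a + 1 = 0 then 1 else (if IsSquare (a * a + 1) then 2 else 0)) := by
    rw [key]
    exact Finset.sum_congr rfl fun a _ => (hfib a).trans (hval a)
  rw [Finset.sum_ite, Finset.sum_const, Finset.sum_ite, Finset.sum_const,
    Finset.sum_const_zero, add_zero, smul_eq_mul, mul_one, smul_eq_mul] at key2
  have efin : (univ.filter fun x : ZMod p => ¬x * x + 1 = 0 ∧ IsSquare (x * x + 1))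
      = univ.filter fun a : ZMod p => a * a + 1 ≠ 0 ∧ IsSquare (a * a + 1) := rfl
  rw [key2, filter_filter, efin, mul_comm]

private lemma aux_A1_card (hodd : p % 2 = 1) :
    (univ.filter fun a : ZMod p => a * a + 1 = 0).card = if p % 4 = 1 then 2 else 0 := by
  by_cases h4 : p % 4 = 1
  · rw [if_pos h4]
    have hs : IsSquare (-1 : ZMod p) := (ZMod.exists_sq_eq_neg_one_iff).mpr (by omega)
    obtain ⟨i, hi⟩ := hs
    have hi0 : i ≠ 0 := by
      rintro rfl
      rw [mul_zero] at hi
      exact one_ne_zero (neg_eq_zero.mp hi)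
    have e : (univ.filter fun a : ZMod p => a * a + 1 = 0)
        = univ.filter fun a : ZMod p => a * a = i * i := by
      ext a
      simp only [mem_filter, mem_univ, true_and, ← hi]
      constructor
      · intro h; linear_combination h
      · intro h; linear_combination h
    rw [e, aux_sq_fiber hodd hi0]
  · rw [if_neg h4]
    rw [filter_eq_empty_iff.mpr, card_empty]
    intro a _
    intro h
    have : IsSquare (-1 : ZMod p) := ⟨a, by linear_combination -h⟩
    rw [ZMod.exists_sq_eq_neg_one_iff] at this
    have hp2 : p % 4 = 3 := by omega
    exact this hp2

private lemma aux_Dall_split :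
    (univ.filter fun a : ZMod p => IsSquare (a * a + 1)).card
      = (univ.filter fun a : ZMod p => a * a + 1 = 0).card
        + (univ.filter fun a : ZMod p => a * a + 1 ≠ 0 ∧ IsSquare (a * a + 1)).card := by
  have h := Finset.card_filter_add_card_filter_not
    (s := univ.filter fun a : ZMod p => IsSquare (a * a + 1))
    (p := fun a : ZMod p => a * a + 1 = 0)
  rw [filter_filter, filter_filter] at h
  have e1 : (univ.filter fun a : ZMod p => IsSquare (a * a + 1) ∧ a * a + 1 = 0)
      = univ.filter fun a : ZMod p => a * a + 1 = 0 := by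
    ext a
    simp only [mem_filter, mem_univ, true_and]
    exact ⟨fun h => h.2, fun h => ⟨by rw [h]; exact ⟨0, by ring⟩, h⟩⟩
  have e2 : (univ.filter fun a : ZMod p => IsSquare (a * a + 1) ∧ ¬a * a + 1 = 0)
      = univ.filter fun a : ZMod p => a * a + 1 ≠ 0 ∧ IsSquare (a * a + 1) := by
    ext a
    simp only [mem_filter, mem_univ, true_and]
    tauto
  rw [e1, e2] at h
  exact h.symm

private lemma aux_Df :
    (univ.filter fun a : ZMod p => IsSquare (a * a + 1)).card
      = (univ.filter fun a : ZMod p => a ≠ 0 ∧ IsSquare (a * a + 1)).card + 1 := by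
  have e : (univ.filter fun a : ZMod p => IsSquare (a * a + 1))
      = insert 0 (univ.filter fun a : ZMod p => a ≠ 0 ∧ IsSquare (a * a + 1)) := by
    ext a
    simp only [mem_filter, mem_univ, true_and, mem_insert]
    by_cases h0 : a = 0
    · subst h0
      simp
    · tauto
  rw [e, card_insert_of_notMem (by simp)]

private lemma aux_T_count (hodd : p % 2 = 1) :
    (univ.filter fun x : ZMod p × ZMod p =>
        x.1 ≠ x.2 ∧ x.1 ≠ 0 ∧ x.2 ≠ 0 ∧ IsSquare (x.1 * x.2 + 1)).card
      + (univ.filter fun a : ZMod p => a ≠ 0 ∧ IsSquare (a * a + 1)).card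
      = (p - 1) * (univ.filter fun y : ZMod p => y ≠ 0 ∧ IsSquare y).card := by
  set T := univ.filter fun x : ZMod p × ZMod p =>
      x.1 ≠ x.2 ∧ x.1 ≠ 0 ∧ x.2 ≠ 0 ∧ IsSquare (x.1 * x.2 + 1) with hT
  set Q := (univ.filter fun y : ZMod p => y ≠ 0 ∧ IsSquare y).card with hQ
  have key : T.card = ∑ a ∈ univ.filter fun a : ZMod p => a ≠ 0,
      (T.filter fun x => x.1 = a).card :=
    card_eq_sum_card_fiberwise (fun x hx => by
      simp only [hT, mem_coe, mem_filter, mem_univ, true_and] at hx ⊢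
      exact hx.2.1)
  have hfib : ∀ a : ZMod p, a ≠ 0 → (T.filter fun x => x.1 = a).card
      = (univ.filter fun b : ZMod p => b ≠ a ∧ b ≠ 0 ∧ IsSquare (a * b + 1)).card := by
    intro a ha
    apply card_nbij' (fun x => x.2) (fun b => (a, b))
    · intro x hx
      simp only [hT, mem_coe, mem_filter, mem_univ, true_and] at hx ⊢
      obtain ⟨⟨h1, _, h3, h4⟩, h5⟩ := hx
      subst h5
      exact ⟨fun h => h1 h.symm, h3, h4⟩
    · intro b hb
      simp only [mem_coe, mem_filter, mem_univ, true_and] at hb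
      refine mem_filter.mpr ⟨mem_filter.mpr ⟨mem_univ _, ?_, ha, hb.2⟩, rfl⟩
      exact fun h => hb.1 h.symm
    · intro x hx
      simp only [mem_coe, mem_filter] at hx
      rw [← hx.2]
    · intro b _; rfl
  have hrow : ∀ a : ZMod p, a ≠ 0 →
      (univ.filter fun b : ZMod p => b ≠ a ∧ b ≠ 0 ∧ IsSquare (a * b + 1)).card
        + (if IsSquare (a * a + 1) then 1 else 0) = Q := by
    intro a ha
    rw [hQ, ← aux_row_count hodd ha]
    have h := Finset.card_filter_add_card_filter_not
      (s := univ.filter fun b : ZMod p => b ≠ 0 ∧ IsSquare (a * b + 1))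
      (p := fun b : ZMod p => b = a)
    rw [filter_filter, filter_filter] at h
    have e1 : (univ.filter fun b : ZMod p => (b ≠ 0 ∧ IsSquare (a * b + 1)) ∧ b = a)
        = if IsSquare (a * a + 1) then {a} else ∅ := by
      by_cases hs : IsSquare (a * a + 1)
      · rw [if_pos hs]
        ext b
        simp only [mem_filter, mem_univ, true_and, mem_singleton]
        constructor
        · exact fun h => h.2
        · rintro rfl; exact ⟨⟨ha, hs⟩, rfl⟩
      · rw [if_neg hs]
        ext b
        simp only [mem_filter, mem_univ, true_and, notMem_empty, iff_false]
        rintro ⟨⟨_, h2⟩, rfl⟩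
        exact hs h2
    have e2 : (univ.filter fun b : ZMod p => (b ≠ 0 ∧ IsSquare (a * b + 1)) ∧ ¬b = a)
        = univ.filter fun b : ZMod p => b ≠ a ∧ b ≠ 0 ∧ IsSquare (a * b + 1) := by
      ext b
      simp only [mem_filter, mem_univ, true_and]
      tauto
    rw [e1, e2] at h
    rw [← h, add_comm]
    congr 1
    by_cases hs : IsSquare (a * a + 1)
    · rw [if_pos hs, if_pos hs, card_singleton]
    · rw [if_neg hs, if_neg hs, card_empty]
  have key2 : T.card + (univ.filter fun a : ZMod p =>
      a ≠ 0 ∧ IsSquare (a * a + 1)).card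
      = ∑ a ∈ univ.filter fun a : ZMod p => a ≠ 0, Q := by
    have hD : (univ.filter fun a : ZMod p => a ≠ 0 ∧ IsSquare (a * a + 1)).card
        = ∑ a ∈ univ.filter fun a : ZMod p => a ≠ 0,
            (if IsSquare (a * a + 1) then 1 else 0) := by
      rw [Finset.sum_ite, Finset.sum_const, Finset.sum_const_zero, add_zero,
        smul_eq_mul, mul_one, filter_filter]
    rw [key, hD, ← Finset.sum_add_distrib]
    refine Finset.sum_congr rfl fun a ha => ?_
    simp only [mem_filter, mem_univ, true_and] at ha
    rw [hfib a ha]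
    exact hrow a ha
  rw [key2, Finset.sum_const, smul_eq_mul, aux_nonzero_card]

set_option maxHeartbeats 1000000 in
private lemma aux_pairs :
    (univ.filter fun x : ZMod p × ZMod p =>
        x.1 ≠ x.2 ∧ x.1 ≠ 0 ∧ x.2 ≠ 0 ∧ IsSquare (x.1 * x.2 + 1)).card
      = 2 * (univ.filter fun s : Finset (ZMod p) => s.card = 2 ∧ (0 : ZMod p) ∉ s ∧
          ∀ a ∈ s, ∀ b ∈ s, a ≠ b → IsSquare (a * b + 1)).card := by
  set T := univ.filter fun x : ZMod p × ZMod p =>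
      x.1 ≠ x.2 ∧ x.1 ≠ 0 ∧ x.2 ≠ 0 ∧ IsSquare (x.1 * x.2 + 1) with hT
  set Sf := univ.filter fun s : Finset (ZMod p) => s.card = 2 ∧ (0 : ZMod p) ∉ s ∧
      ∀ a ∈ s, ∀ b ∈ s, a ≠ b → IsSquare (a * b + 1) with hSf
  have key : T.card = ∑ s ∈ Sf, (T.filter fun x => ({x.1, x.2} : Finset (ZMod p)) = s).card := by
    refine card_eq_sum_card_fiberwise fun x hx => ?_
    simp only [hT, mem_coe, mem_filter, mem_univ, true_and] at hx
    obtain ⟨h1, h2, h3, h4⟩ := hx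
    simp only [hSf, mem_coe, mem_filter, mem_univ, true_and]
    refine ⟨card_pair h1, ?_, ?_⟩
    · intro h
      rw [mem_insert, mem_singleton] at h
      rcases h with h | h
      · exact h2 h.symm
      · exact h3 h.symm
    · intro c hc d hd hne
      rw [mem_insert, mem_singleton] at hc hd
      rcases hc with rfl | rfl <;> rcases hd with rfl | rfl
      · exact absurd rfl hne
      · exact h4
      · rw [mul_comm]; exact h4
      · exact absurd rfl hne
  have hfib : ∀ s ∈ Sf, (T.filter fun x => ({x.1, x.2} : Finset (ZMod p)) = s).card = 2 := by
    intro s hs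
    simp only [hSf, mem_filter, mem_univ, true_and] at hs
    obtain ⟨hcard, h0, hsq⟩ := hs
    obtain ⟨a, b, hab, rfl⟩ := Finset.card_eq_two.mp hcard
    have ha0 : a ≠ 0 := by rintro rfl; exact h0 (mem_insert_self _ _)
    have hb0 : b ≠ 0 := by rintro rfl; exact h0 (mem_insert_of_mem (mem_singleton_self _))
    have e : T.filter (fun x => ({x.1, x.2} : Finset (ZMod p)) = {a, b})
        = ({((a : ZMod p), (b : ZMod p)), (b, a)} : Finset (ZMod p × ZMod p)) := by
      ext x
      simp only [hT, mem_filter, mem_univ, true_and, mem_insert, mem_singleton]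
      constructor
      · rintro ⟨⟨hne, _, _, _⟩, hpair⟩
        have h1 : x.1 ∈ ({a, b} : Finset (ZMod p)) := by
          rw [← hpair]; exact mem_insert_self _ _
        have h2 : x.2 ∈ ({a, b} : Finset (ZMod p)) := by
          rw [← hpair]; exact mem_insert_of_mem (mem_singleton_self _)
        rw [mem_insert, mem_singleton] at h1 h2
        rcases h1 with h1 | h1 <;> rcases h2 with h2 | h2
        · exact absurd (h1.trans h2.symm) hne
        · left; exact Prod.ext h1 h2
        · right; exact Prod.ext h1 h2
        · exact absurd (h1.trans h2.symm) hne
      · rintro (rfl | rfl)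
        · exact ⟨⟨hab, ha0, hb0, hsq a (mem_insert_self _ _) b
            (mem_insert_of_mem (mem_singleton_self _)) hab⟩, rfl⟩
        · exact ⟨⟨fun h => hab h.symm, hb0, ha0, hsq b
            (mem_insert_of_mem (mem_singleton_self _)) a (mem_insert_self _ _)
            (fun h => hab h.symm)⟩, pair_comm _ _⟩
    rw [e, card_pair]
    intro h
    exact hab (congrArg Prod.fst h)
  rw [key, Finset.sum_congr rfl hfib, Finset.sum_const, smul_eq_mul, mul_comm]

end Aux

theorem dioph_pairs_count (p : ℕ) (hp : p.Prime) (hodd : p % 2 = 1) :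
    {s : Finset (ZMod p) | s.card = 2 ∧ (0 : ZMod p) ∉ s ∧
        ∀ a ∈ s, ∀ b ∈ s, a ≠ b → IsSquare (a * b + 1)}.ncard =
      if p % 4 = 1 then (p - 1) * (p - 2) / 4 else (p ^ 2 - 3 * p + 4) / 4 := by
  haveI : Fact p.Prime := ⟨hp⟩
  have hset : {s : Finset (ZMod p) | s.card = 2 ∧ (0 : ZMod p) ∉ s ∧
      ∀ a ∈ s, ∀ b ∈ s, a ≠ b → IsSquare (a * b + 1)}
      = ↑(univ.filter fun s : Finset (ZMod p) => s.card = 2 ∧ (0 : ZMod p) ∉ s ∧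
          ∀ a ∈ s, ∀ b ∈ s, a ≠ b → IsSquare (a * b + 1)) := by
    ext s
    simp only [Set.mem_setOf_eq, coe_filter, mem_univ, true_and]
  rw [hset, Set.ncard_coe_finset]
  have hQ2 : 2 * (univ.filter fun y : ZMod p => y ≠ 0 ∧ IsSquare y).card = p - 1 :=
    aux_sq_count hodd
  have hhyp := aux_hyp_split (p := p) hodd
  have hA1 := aux_A1_card (p := p) hodd
  have hDall := aux_Dall_split (p := p)
  have hDf := aux_Df (p := p)
  have hT := aux_T_count (p := p) hodd
  have hP := aux_pairs (p := p)
  set Q := (univ.filter fun y : ZMod p => y ≠ 0 ∧ IsSquare y).card with hQdef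
  set A1c := (univ.filter fun a : ZMod p => a * a + 1 = 0).card with hA1def
  set A2c := (univ.filter fun a : ZMod p =>
      a * a + 1 ≠ 0 ∧ IsSquare (a * a + 1)).card with hA2def
  set Dallc := (univ.filter fun a : ZMod p => IsSquare (a * a + 1)).card with hDalldef
  set Dfc := (univ.filter fun a : ZMod p => a ≠ 0 ∧ IsSquare (a * a + 1)).card with hDfdef
  set Tc := (univ.filter fun x : ZMod p × ZMod p =>
      x.1 ≠ x.2 ∧ x.1 ≠ 0 ∧ x.2 ≠ 0 ∧ IsSquare (x.1 * x.2 + 1)).card with hTdef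
  set Sc := (univ.filter fun s : Finset (ZMod p) => s.card = 2 ∧ (0 : ZMod p) ∉ s ∧
      ∀ a ∈ s, ∀ b ∈ s, a ≠ b → IsSquare (a * b + 1)).card with hScdef
  clear_value Q A1c A2c Dallc Dfc Tc Sc
  have hple := hp.two_le
  by_cases h4 : p % 4 = 1
  · rw [if_pos h4]
    rw [if_pos h4] at hA1
    obtain ⟨k, hk, hk1⟩ : ∃ k, p = 4 * k + 1 ∧ 1 ≤ k := ⟨p / 4, by omega⟩
    have hQv : Q = 2 * k := by omega
    have hT8 : Tc + Dfc = 8 * (k * k) := by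
      rw [hT, show p - 1 = 4 * k by omega, hQv]; ring
    have hgoal : (p - 1) * (p - 2) + 4 * k = 16 * (k * k) := by
      obtain ⟨j, rfl⟩ : ∃ j, k = j + 1 := ⟨k - 1, by omega⟩
      rw [show p - 1 = 4 * (j + 1) by omega, show p - 2 = 4 * j + 3 by omega]
      ring
    set m := k * k with hm
    clear_value m
    omega
  · rw [if_neg h4]
    rw [if_neg h4] at hA1
    obtain ⟨k, hk⟩ : ∃ k, p = 4 * k + 3 := ⟨p / 4, by omega⟩
    have hQv : Q = 2 * k + 1 := by omega
    have hT8 : Tc + Dfc = 8 * (k * k) + 8 * k + 2 := by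
      rw [hT, show p - 1 = 4 * k + 2 by omega, hQv]; ring
    have hp2 : p ^ 2 = 16 * (k * k) + 24 * k + 9 := by rw [hk]; ring
    rw [hp2]
    set m := k * k with hm
    clear_value m
    omega
end

section
/- Let m ≥ 2 be an integer. If p > 2^(2m-2) m^2 is a prime, then there exists a Diophantine m-tuple in F_p. -/
open Finset

namespace DiophTupleAux

variable {p : ℕ} [Fact p.Prime]

local notation "χ" => quadraticChar (ZMod p)

lemma chi_sum_shift (hp2 : p ≠ 2) {d : ZMod p} (hd : d ≠ 0) :
    ∑ a : ZMod p, χ (a * (a + d)) = -1 := by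
  have hchar : ringChar (ZMod p) ≠ 2 := by rw [ZMod.ringChar_zmod_n]; exact hp2
  have h0 : ∑ a : ZMod p, χ (a * (a + d)) =
      ∑ a ∈ (univ : Finset (ZMod p)).erase 0, χ (a * (a + d)) := by
    rw [← Finset.add_sum_erase (univ : Finset (ZMod p)) _ (mem_univ (0 : ZMod p))]
    simp
  rw [h0]
  have h1 : ∑ a ∈ (univ : Finset (ZMod p)).erase 0, χ (a * (a + d)) =
      ∑ c ∈ (univ : Finset (ZMod p)).erase 1, χ c := by
    refine Finset.sum_nbij' (fun b => 1 + d * b⁻¹) (fun c => d * (c - 1)⁻¹) ?_ ?_ ?_ ?_ ?_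
    · intro b hb
      have hb0 : b ≠ 0 := (mem_erase.mp hb).1
      simp only [mem_erase, mem_univ, and_true]
      intro h
      have : d * b⁻¹ = 0 := by linear_combination h
      exact (mul_ne_zero hd (inv_ne_zero hb0)) this
    · intro c hc
      have hc1 : c ≠ 1 := (mem_erase.mp hc).1
      simp only [mem_erase, mem_univ, and_true]
      exact mul_ne_zero hd (inv_ne_zero (sub_ne_zero.mpr hc1))
    · intro b hb
      have hb0 : b ≠ 0 := (mem_erase.mp hb).1
      field_simp
      rw [add_sub_cancel_left, div_self hd]
    · intro c hc
      have hc1 : c ≠ 1 := (mem_erase.mp hc).1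
      have h1 : c - 1 ≠ 0 := sub_ne_zero.mpr hc1
      field_simp
      ring
    · intro b hb
      have hb0 : b ≠ 0 := (mem_erase.mp hb).1
      have key : b * (b + d) = b ^ 2 * (1 + d * b⁻¹) := by
        field_simp
      rw [key, map_mul, quadraticChar_sq_one' hb0, one_mul]
  rw [h1]
  have h2 : χ 1 + ∑ c ∈ (univ : Finset (ZMod p)).erase 1, χ c = ∑ c : ZMod p, χ c :=
    Finset.add_sum_erase (univ : Finset (ZMod p)) _ (mem_univ (1 : ZMod p))
  have h3 : ∑ c : ZMod p, χ c = 0 := quadraticChar_sum_zero hchar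
  have h4 : χ (1 : ZMod p) = 1 := map_one _
  rw [h3, h4] at h2
  linarith

lemma chi_sum_cross (hp2 : p ≠ 2) {x y : ZMod p} (hx : x ≠ 0) (hy : y ≠ 0) (hxy : x ≠ y) :
    ∑ a : ZMod p, χ (a * x + 1) * χ (a * y + 1) = -(χ x * χ y) := by
  have key : ∀ a : ZMod p, (a * x + 1) * (a * y + 1) = x * y * ((a + x⁻¹) * (a + y⁻¹)) := by
    intro a; field_simp
    try ring
  have step1 : ∑ a : ZMod p, χ (a * x + 1) * χ (a * y + 1)
      = χ (x * y) * ∑ a : ZMod p, χ ((a + x⁻¹) * (a + y⁻¹)) := by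
    rw [Finset.mul_sum]
    refine Finset.sum_congr rfl fun a _ => ?_
    rw [← map_mul, key a, map_mul]
  have hd : y⁻¹ - x⁻¹ ≠ 0 := by
    refine sub_ne_zero.mpr fun h => hxy ?_
    exact (inv_injective h).symm
  have step2 : ∑ a : ZMod p, χ ((a + x⁻¹) * (a + y⁻¹))
      = ∑ b : ZMod p, χ (b * (b + (y⁻¹ - x⁻¹))) := by
    rw [← Equiv.sum_comp (Equiv.addRight x⁻¹) (fun b => χ (b * (b + (y⁻¹ - x⁻¹))))]
    refine Finset.sum_congr rfl fun a _ => ?_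
    simp only [Equiv.coe_addRight]
    ring_nf
  rw [step1, step2, chi_sum_shift hp2 hd, map_mul]
  ring

lemma chi_sum_diag {x : ZMod p} (hx : x ≠ 0) :
    ∑ a : ZMod p, χ (a * x + 1) * χ (a * x + 1) = (p : ℤ) - 1 := by
  classical
  set a₀ : ZMod p := -x⁻¹ with ha₀
  have h₀ : a₀ * x + 1 = 0 := by
    rw [ha₀, neg_mul, inv_mul_cancel₀ hx]; ring
  rw [← Finset.add_sum_erase (univ : Finset (ZMod p)) _ (mem_univ a₀), h₀]
  have hterm : ∀ a ∈ (univ : Finset (ZMod p)).erase a₀,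
      χ (a * x + 1) * χ (a * x + 1) = 1 := by
    intro a ha
    have hne : a * x + 1 ≠ 0 := by
      intro h
      apply (mem_erase.mp ha).1
      apply mul_right_cancel₀ hx
      linear_combination h - h₀
    have := quadraticChar_sq_one hne
    rwa [sq] at this
  rw [Finset.sum_congr rfl hterm, Finset.sum_const, card_erase_of_mem (mem_univ _),
    card_univ, ZMod.card]
  have hp1 : 1 ≤ p := (Fact.out : p.Prime).one_lt.le
  simp only [quadraticChar_zero, mul_zero, zero_mul, zero_add, nsmul_eq_mul, mul_one]
  push_cast [hp1]
  ring

lemma chi_second_moment (hp2 : p ≠ 2) (U : Finset (ZMod p)) (h0 : (0 : ZMod p) ∉ U) :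
    ∑ a : ZMod p, (∑ x ∈ U, χ (a * x + 1)) ^ 2 ≤ (p : ℤ) * U.card := by
  classical
  have expand : ∑ a : ZMod p, (∑ x ∈ U, χ (a * x + 1)) ^ 2
      = ∑ x ∈ U, ∑ y ∈ U, ∑ a : ZMod p, χ (a * x + 1) * χ (a * y + 1) := by
    calc ∑ a : ZMod p, (∑ x ∈ U, χ (a * x + 1)) ^ 2
        = ∑ a : ZMod p, ∑ x ∈ U, ∑ y ∈ U, χ (a * x + 1) * χ (a * y + 1) := by
          refine Finset.sum_congr rfl fun a _ => ?_
          rw [sq, Finset.sum_mul_sum]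
      _ = ∑ x ∈ U, ∑ a : ZMod p, ∑ y ∈ U, χ (a * x + 1) * χ (a * y + 1) :=
          Finset.sum_comm
      _ = ∑ x ∈ U, ∑ y ∈ U, ∑ a : ZMod p, χ (a * x + 1) * χ (a * y + 1) :=
          Finset.sum_congr rfl fun x _ => Finset.sum_comm
  have inner : ∀ x ∈ U, ∀ y ∈ U, ∑ a : ZMod p, χ (a * x + 1) * χ (a * y + 1)
      = (if x = y then (p : ℤ) else 0) - χ x * χ y := by
    intro x hx y hy
    have hx0 : x ≠ 0 := fun h => h0 (h ▸ hx)
    have hy0 : y ≠ 0 := fun h => h0 (h ▸ hy)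
    by_cases hxy : x = y
    · subst hxy
      rw [chi_sum_diag hx0, if_pos rfl]
      have := quadraticChar_sq_one hx0
      rw [sq] at this
      rw [this]
    · rw [chi_sum_cross hp2 hx0 hy0 hxy, if_neg hxy]
      ring
  have expand2 : ∑ x ∈ U, ∑ y ∈ U, ∑ a : ZMod p, χ (a * x + 1) * χ (a * y + 1)
      = (p : ℤ) * U.card - (∑ x ∈ U, χ x) ^ 2 := by
    rw [Finset.sum_congr rfl fun x hx => Finset.sum_congr rfl fun y hy => inner x hx y hy]
    rw [Finset.sum_congr rfl (fun x (_ : x ∈ U) => Finset.sum_sub_distrib _ _)]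
    rw [Finset.sum_sub_distrib]
    have e1 : ∑ x ∈ U, ∑ y ∈ U, (if x = y then (p : ℤ) else 0) = (p : ℤ) * U.card := by
      have : ∀ x ∈ U, ∑ y ∈ U, (if x = y then (p : ℤ) else 0) = (p : ℤ) := by
        intro x hx
        rw [Finset.sum_ite_eq U x (fun _ => (p : ℤ)), if_pos hx]
      rw [Finset.sum_congr rfl this, Finset.sum_const, nsmul_eq_mul]
      ring
    have e2 : ∑ x ∈ U, ∑ y ∈ U, χ x * χ y = (∑ x ∈ U, χ x) ^ 2 := by
      rw [sq, Finset.sum_mul_sum]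
    rw [e1, e2]
  rw [expand, expand2]
  have := sq_nonneg (∑ x ∈ U, χ x)
  linarith

lemma exists_good_vertex (hp2 : p ≠ 2) (U : Finset (ZMod p)) (h0 : (0 : ZMod p) ∉ U)
    (hne : U.Nonempty) :
    ∃ a ∈ U, ∃ V : Finset (ZMod p), V ⊆ U.erase a ∧ (∀ x ∈ V, IsSquare (a * x + 1)) ∧
      (U.card : ℤ) - ((Nat.sqrt p : ℤ) + 3) ≤ 2 * V.card := by
  classical
  set F : ZMod p → ℤ := fun a => ∑ x ∈ U, χ (a * x + 1) with hF
  set R : ℤ := (Nat.sqrt p : ℤ) with hR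
  have hRnn : (0 : ℤ) ≤ R := by positivity
  have hcard1 : (1 : ℤ) ≤ U.card := by exact_mod_cast Finset.card_pos.mpr hne
  -- Cauchy-Schwarz
  have hCS : (∑ a ∈ U, F a) ^ 2 ≤ (∑ a ∈ U, (F a) ^ 2) * U.card := by
    have h := Finset.sum_mul_sq_le_sq_mul_sq U F (fun _ => (1 : ℤ))
    simpa using h
  have h2 : ∑ a ∈ U, (F a) ^ 2 ≤ (p : ℤ) * U.card := by
    refine le_trans (Finset.sum_le_sum_of_subset_of_nonneg (subset_univ U)
      (fun _ _ _ => sq_nonneg _)) ?_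
    exact chi_second_moment hp2 U h0
  have hS2 : (∑ a ∈ U, F a) ^ 2 ≤ (p : ℤ) * U.card * U.card :=
    le_trans hCS (by nlinarith)
  have hpR : (p : ℤ) < (R + 1) ^ 2 := by
    have := Nat.lt_succ_sqrt' p
    rw [hR]
    push_cast
    exact_mod_cast this
  have hT : (0 : ℤ) ≤ (R + 1) * U.card := by positivity
  have hS2' : (∑ a ∈ U, F a) ^ 2 ≤ ((R + 1) * U.card) ^ 2 := by
    have hmul := mul_le_mul_of_nonneg_right (le_of_lt hpR) (sq_nonneg ((U.card : ℤ)))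
    nlinarith [hS2]
  have hsum_lb : -((R + 1) * U.card) ≤ ∑ a ∈ U, F a := by
    by_contra hc
    push_neg at hc
    have hneg : (0 : ℤ) < -((∑ a ∈ U, F a) + (R + 1) * U.card) := by linarith
    nlinarith [mul_pos hneg hneg, mul_nonneg hT (show (0:ℤ) ≤ -((∑ a ∈ U, F a) + (R + 1) * U.card) by linarith)]
  -- average argument
  have havg : ∃ a ∈ U, -(R + 1) ≤ F a := by
    by_contra hcon
    push_neg at hcon
    have hlt : ∑ a ∈ U, F a < ∑ a ∈ U, (-(R + 1)) :=
      Finset.sum_lt_sum_of_nonempty hne hcon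
    rw [Finset.sum_const, nsmul_eq_mul] at hlt
    have : (U.card : ℤ) * (-(R + 1)) = -((R + 1) * U.card) := by ring
    rw [this] at hlt
    linarith
  obtain ⟨a, haU, haF⟩ := havg
  set V : Finset (ZMod p) := (U.erase a).filter (fun x => IsSquare (a * x + 1)) with hV
  refine ⟨a, haU, V, Finset.filter_subset _ _, fun x hx => (Finset.mem_filter.mp hx).2, ?_⟩
  set G : Finset (ZMod p) := U.filter (fun x => IsSquare (a * x + 1)) with hG
  have hVG : V = G.erase a := by rw [hV, hG, Finset.filter_erase]
  have hVcard : (G.card : ℤ) ≤ (V.card : ℤ) + 1 := by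
    rw [hVG]
    have := Finset.pred_card_le_card_erase (s := G) (a := a)
    have h' : G.card ≤ (G.erase a).card + 1 := by omega
    exact_mod_cast h'
  -- counting
  have hpoint : ∀ t : ZMod p, 1 + χ t ≤ (if IsSquare t then 2 else 0 : ℤ) := by
    intro t
    by_cases hs : IsSquare t
    · rw [if_pos hs]
      by_cases ht : t = 0
      · rw [ht, quadraticChar_zero]; norm_num
      · rw [(quadraticChar_one_iff_isSquare ht).mpr hs]; norm_num
    · rw [if_neg hs, quadraticChar_neg_one_iff_not_isSquare.mpr hs]
      norm_num
  have hcount : (U.card : ℤ) + F a ≤ 2 * G.card := by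
    have e1 : (U.card : ℤ) + F a = ∑ x ∈ U, (1 + χ (a * x + 1)) := by
      rw [Finset.sum_add_distrib, Finset.sum_const, nsmul_eq_mul, mul_one, hF]
    have e2 : ∑ x ∈ U, (1 + χ (a * x + 1))
        ≤ ∑ x ∈ U, (if IsSquare (a * x + 1) then 2 else 0 : ℤ) :=
      Finset.sum_le_sum fun x _ => hpoint (a * x + 1)
    have e3 : ∑ x ∈ U, (if IsSquare (a * x + 1) then 2 else 0 : ℤ) = 2 * G.card := by
      rw [hG, ← Finset.sum_filter, Finset.sum_const, nsmul_eq_mul]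
      ring
    rw [e1]
    calc ∑ x ∈ U, (1 + χ (a * x + 1)) ≤ _ := e2
      _ = 2 * G.card := e3
  linarith

end DiophTupleAux

theorem exists_dioph_m_tuple (m p : ℕ) (hm : 2 ≤ m) (hp : p.Prime)
    (hpm : p > 2 ^ (2 * m - 2) * m ^ 2) :
    ∃ s : Finset (ZMod p), s.card = m ∧ (0 : ZMod p) ∉ s ∧
      ∀ a ∈ s, ∀ b ∈ s, a ≠ b → IsSquare (a * b + 1) := by
  haveI : Fact p.Prime := ⟨hp⟩
  classical
  -- basic arithmetic facts
  have h16 : 16 < p := by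
    have h1 : (2 : ℕ) ^ 2 ≤ 2 ^ (2 * m - 2) := Nat.pow_le_pow_right (by norm_num) (by omega)
    have h2 : (2 : ℕ) ^ 2 ≤ m ^ 2 := Nat.pow_le_pow_left hm 2
    have : 16 ≤ 2 ^ (2 * m - 2) * m ^ 2 := by nlinarith
    omega
  have hp2 : p ≠ 2 := by omega
  set r : ℕ := Nat.sqrt p with hr
  have hr1 : 2 ^ (m - 1) * m ≤ r := by
    rw [hr]
    rw [Nat.le_sqrt]
    have e : (m - 1) + (m - 1) = 2 * m - 2 := by omega
    calc 2 ^ (m - 1) * m * (2 ^ (m - 1) * m) = 2 ^ ((m - 1) + (m - 1)) * m ^ 2 := by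
          rw [pow_add]; ring
      _ = 2 ^ (2 * m - 2) * m ^ 2 := by rw [e]
      _ ≤ p := le_of_lt hpm
  have hpow2 : 2 ≤ 2 ^ (m - 1) := by
    calc (2 : ℕ) = 2 ^ 1 := (pow_one 2).symm
      _ ≤ 2 ^ (m - 1) := Nat.pow_le_pow_right (by norm_num) (by omega)
  have hr4 : 4 ≤ r := by
    have : 4 ≤ 2 ^ (m - 1) * m := by nlinarith
    omega
  have hA : 2 ^ (m - 1) * (r + 4) ≤ p := by
    calc 2 ^ (m - 1) * (r + 4) ≤ 2 ^ (m - 1) * (m * r) := by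
          apply Nat.mul_le_mul_left
          nlinarith
      _ = 2 ^ (m - 1) * m * r := by ring
      _ ≤ r * r := Nat.mul_le_mul_right r hr1
      _ ≤ p := Nat.sqrt_le p
  -- nonemptiness bound, in ℤ
  have hApos : ∀ k : ℕ, k ≤ m - 1 →
      (1 : ℤ) ≤ (p : ℤ) - 1 - ((2 : ℤ) ^ k - 1) * ((r : ℤ) + 3) := by
    intro k hk
    have hBA : (2 : ℤ) ^ k ≤ 2 ^ (m - 1) := pow_le_pow_right₀ (by norm_num) hk
    have hB1 : (1 : ℤ) ≤ 2 ^ k := by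
      have : (1 : ℕ) ≤ 2 ^ k := Nat.one_le_two_pow
      exact_mod_cast this
    have hAcast : (2 : ℤ) ^ (m - 1) * ((r : ℤ) + 4) ≤ (p : ℤ) := by exact_mod_cast hA
    have hrc : (4 : ℤ) ≤ (r : ℤ) := by exact_mod_cast hr4
    nlinarith [mul_le_mul_of_nonneg_right hBA (show (0 : ℤ) ≤ (r : ℤ) + 3 by linarith)]
  -- the main induction
  have main : ∀ k : ℕ, k ≤ m - 1 → ∃ s U : Finset (ZMod p),
      s.card = k ∧ (0 : ZMod p) ∉ s ∧ (0 : ZMod p) ∉ U ∧ (∀ x ∈ s, x ∉ U) ∧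
      (∀ a ∈ s, ∀ b ∈ s, a ≠ b → IsSquare (a * b + 1)) ∧
      (∀ a ∈ s, ∀ x ∈ U, IsSquare (a * x + 1)) ∧
      ((p : ℤ) - 1 - ((2 : ℤ) ^ k - 1) * ((r : ℤ) + 3) ≤ (U.card : ℤ) * 2 ^ k) := by
    intro k
    induction k with
    | zero =>
      intro _
      refine ⟨∅, (univ : Finset (ZMod p)).erase 0, by simp, by simp, by simp, by simp,
        by simp, by simp, ?_⟩
      rw [card_erase_of_mem (mem_univ _), card_univ, ZMod.card]
      have hp1 : 1 ≤ p := hp.one_lt.le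
      push_cast [hp1]
      ring_nf
      norm_num
    | succ k ih =>
      intro hk
      obtain ⟨s, U, hcard, h0s, h0U, hdisj, hpair, hcross, hbound⟩ := ih (by omega)
      have hUpos : (0 : ℤ) < (U.card : ℤ) * 2 ^ k :=
        lt_of_lt_of_le (lt_of_lt_of_le one_pos (hApos k (by omega))) hbound
      have hUne : U.Nonempty := by
        rw [← Finset.card_pos]
        by_contra h
        push_neg at h
        interval_cases hc : U.card
        · simp at hUpos
      obtain ⟨a, haU, V, hVsub, hVsq, hVcard⟩ :=
        DiophTupleAux.exists_good_vertex hp2 U h0U hUne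
      have hane0 : a ≠ 0 := fun h => h0U (h ▸ haU)
      have hans : a ∉ s := fun h => hdisj a h haU
      have hVU : V ⊆ U := hVsub.trans (Finset.erase_subset _ _)
      refine ⟨insert a s, V, ?_, ?_, ?_, ?_, ?_, ?_, ?_⟩
      · rw [Finset.card_insert_of_notMem hans, hcard]
      · intro h
        rcases Finset.mem_insert.mp h with h | h
        · exact hane0 h.symm
        · exact h0s h
      · exact fun h => h0U (hVU h)
      · intro x hx
        rcases Finset.mem_insert.mp hx with h | h
        · subst h
          exact fun hxV => (Finset.mem_erase.mp (hVsub hxV)).1 rfl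
        · exact fun hxV => hdisj x h (hVU hxV)
      · intro b hb c hc hbc
        rcases Finset.mem_insert.mp hb with hb' | hb' <;>
          rcases Finset.mem_insert.mp hc with hc' | hc'
        · exact absurd (hb'.trans hc'.symm) hbc
        · subst hb'
          have := hcross c hc' b haU
          rwa [mul_comm] at this
        · subst hc'
          exact hcross b hb' c haU
        · exact hpair b hb' c hc' hbc
      · intro b hb x hxV
        rcases Finset.mem_insert.mp hb with hb' | hb'
        · subst hb'
          exact hVsq x hxV
        · exact hcross b hb' x (hVU hxV)
      · have hstep : ((U.card : ℤ) - ((r : ℤ) + 3)) * 2 ^ k ≤ (2 * V.card) * 2 ^ k :=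
          mul_le_mul_of_nonneg_right hVcard (by positivity)
        have e : ((V.card : ℤ)) * 2 ^ (k + 1) = (2 * V.card) * 2 ^ k := by ring
        rw [e]
        have e2 : ((2 : ℤ) ^ (k + 1) - 1) * ((r : ℤ) + 3)
            = ((2 : ℤ) ^ k - 1) * ((r : ℤ) + 3) + 2 ^ k * ((r : ℤ) + 3) := by ring
        nlinarith [hbound, hstep]
  -- conclude
  obtain ⟨s, U, hcard, h0s, h0U, hdisj, hpair, hcross, hbound⟩ := main (m - 1) le_rfl
  have hUpos : (0 : ℤ) < (U.card : ℤ) * 2 ^ (m - 1) :=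
    lt_of_lt_of_le (lt_of_lt_of_le one_pos (hApos (m - 1) le_rfl)) hbound
  have hUne : U.Nonempty := by
    rw [← Finset.card_pos]
    by_contra h
    push_neg at h
    interval_cases hc : U.card
    · simp at hUpos
  obtain ⟨x, hxU⟩ := hUne
  have hxs : x ∉ s := fun h => hdisj x h hxU
  refine ⟨insert x s, ?_, ?_, ?_⟩
  · rw [Finset.card_insert_of_notMem hxs, hcard]
    omega
  · intro h
    rcases Finset.mem_insert.mp h with h | h
    · exact h0U (h ▸ hxU)
    · exact h0s h
  · intro b hb c hc hbc
    rcases Finset.mem_insert.mp hb with hb' | hb' <;>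
      rcases Finset.mem_insert.mp hc with hc' | hc'
    · exact absurd (hb'.trans hc'.symm) hbc
    · subst hb'
      have := hcross c hc' b hxU
      rwa [mul_comm] at this
    · subst hc'
      exact hcross b hb' c hxU
    · exact hpair b hb' c hc' hbc
end

section
/- For any prime p ≥ 11, at least one of the sets {1,3,8,120} and {2,24,40,7812} reduces modulo p to a Diophantine quadruple in F_p (i.e., the four elements are distinct and nonzero mod p and all six pairwise products plus one are squares mod p). -/
/-- `a, b, c, d` form a Diophantine quadruple in `ZMod p`: they are distinct, nonzero,
and the product of any two distinct ones plus one is a square (0 counts as a square). -/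
def IsDiophQuadruple {p : ℕ} (a b c d : ZMod p) : Prop :=
  a ≠ 0 ∧ b ≠ 0 ∧ c ≠ 0 ∧ d ≠ 0 ∧
  a ≠ b ∧ a ≠ c ∧ a ≠ d ∧ b ≠ c ∧ b ≠ d ∧ c ≠ d ∧
  IsSquare (a * b + 1) ∧ IsSquare (a * c + 1) ∧ IsSquare (a * d + 1) ∧
  IsSquare (b * c + 1) ∧ IsSquare (b * d + 1) ∧ IsSquare (c * d + 1)

/-!
Both sets are Diophantine quadruples over `ℤ`, so each `xy + 1` is an integer square and stays a
square mod `p`. Reduction mod `p` can only fail by making an element vanish or two elements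
collide, i.e. when `p` divides the product of the elements and of their pairwise differences.
For the two sets these products are `2^11 3^4 5^2 7^3 13 17` and
`2^20 3^4 5^2 7 11^3 19 29 31 59 67 71`, whose gcd `29030400 = 2^11 3^4 5^2 7` has no prime
factor `≥ 11`.
-/

def degeneracyProduct (a b c d : ℤ) : ℤ :=
  a * b * c * d * ((a - b) * (a - c) * (a - d) * (b - c) * (b - d) * (c - d))

theorem IsDiophQuadruple.of_int {p : ℕ} [Fact p.Prime] {a b c d : ℤ}
    (hab : IsSquare (a * b + 1)) (hac : IsSquare (a * c + 1)) (had : IsSquare (a * d + 1))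
    (hbc : IsSquare (b * c + 1)) (hbd : IsSquare (b * d + 1)) (hcd : IsSquare (c * d + 1))
    (hdeg : ¬ (p : ℤ) ∣ degeneracyProduct a b c d) :
    IsDiophQuadruple (a : ZMod p) b c d := by
  rw [← ZMod.intCast_zmod_eq_zero_iff_dvd, degeneracyProduct] at hdeg
  push_cast at hdeg
  simp only [mul_eq_zero, sub_eq_zero, not_or] at hdeg
  obtain ⟨⟨⟨⟨ha, hb⟩, hc⟩, hd⟩, ⟨⟨⟨⟨⟨hab', hac'⟩, had'⟩, hbc'⟩, hbd'⟩, hcd'⟩⟩ := hdeg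
  have cast_sq {x : ℤ} (hx : IsSquare x) : IsSquare (x : ZMod p) := hx.map (Int.castRingHom _)
  refine ⟨ha, hb, hc, hd, hab', hac', had', hbc', hbd', hcd', ?_, ?_, ?_, ?_, ?_, ?_⟩ <;>
    exact_mod_cast cast_sq ‹_›

theorem not_dvd_degeneracyProduct_of_dvd_degeneracyProduct {p : ℕ} (hp : p.Prime) (h11 : 11 ≤ p)
    (h1 : (p : ℤ) ∣ degeneracyProduct 1 3 8 120) : ¬ (p : ℤ) ∣ degeneracyProduct 2 24 40 7812 := by
  intro h2
  have hg : p ∣ 29030400 := by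
    simpa [degeneracyProduct, Int.gcd] using Int.dvd_gcd h1 h2
  have hmem := (Nat.mem_primeFactorsList' (n := 29030400)).2 ⟨hp, hg, by norm_num⟩
  simp only [Nat.primeFactorsList_ofNat, List.mem_cons, List.not_mem_nil, or_false,
    or_self_left] at hmem
  omega

theorem quadruple_mod_p (p : ℕ) (hp : p.Prime) (h11 : 11 ≤ p) :
    IsDiophQuadruple (1 : ZMod p) 3 8 120 ∨
      IsDiophQuadruple (2 : ZMod p) 24 40 7812 := by
  have := Fact.mk hp
  by_cases h1 : (p : ℤ) ∣ degeneracyProduct 1 3 8 120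
  · right
    exact_mod_cast IsDiophQuadruple.of_int (p := p) (a := 2) (b := 24) (c := 40) (d := 7812)
      ⟨7, by norm_num⟩ ⟨9, by norm_num⟩ ⟨125, by norm_num⟩ ⟨31, by norm_num⟩ ⟨433, by norm_num⟩
      ⟨559, by norm_num⟩ (not_dvd_degeneracyProduct_of_dvd_degeneracyProduct hp h11 h1)
  · left
    exact_mod_cast IsDiophQuadruple.of_int (p := p) (a := 1) (b := 3) (c := 8) (d := 120)
      ⟨2, by norm_num⟩ ⟨3, by norm_num⟩ ⟨11, by norm_num⟩ ⟨5, by norm_num⟩ ⟨19, by norm_num⟩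
      ⟨31, by norm_num⟩ h1
end

section
/- Let p be an odd prime, let t ∈ F_p with t ≠ 0, 1, and suppose the elliptic curve E_t: y^2 = x^3 - 2(t-2)x^2 + t^2 x over F_p has full 2-torsion over F_p. If T is a point of order two on E_t(F_p) with T ≠ (0,0), then the x-coordinate of T is a square in F_p if and only if p ≡ 1 (mod 4). -/
/-! Completing the square, `x² + (4 - 2t)x + t² = (x - t)² + 4x`, so a nonzero root `x₀`
satisfies `x₀ = -u²` with `u = (x₀ - t)/2 ≠ 0`. Hence `x₀` is a square exactly when `-1` is,
i.e. when `p ≡ 1 (mod 4)`. -/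

theorem isSquare_mul_sq_iff {α : Type*} [CommGroupWithZero α] {a u : α} (hu : u ≠ 0) :
    IsSquare (a * u ^ 2) ↔ IsSquare a :=
  ⟨fun h => by simpa [hu] using h.div (IsSquare.sq u), fun h => h.mul (IsSquare.sq u)⟩

theorem neg_eq_sq_of_two_torsion_root {F : Type*} [Field F] (h2 : (2 : F) ≠ 0) {t x : F}
    (hroot : x ^ 2 + (4 - 2 * t) * x + t ^ 2 = 0) : -x = ((x - t) / 2) ^ 2 := by
  field_simp
  linear_combination -hroot

theorem isSquare_iff_isSquare_neg_one_of_two_torsion_root {F : Type*} [Field F]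
    (h2 : (2 : F) ≠ 0) {t x : F} (hx : x ≠ 0) (hroot : x ^ 2 + (4 - 2 * t) * x + t ^ 2 = 0) :
    IsSquare x ↔ IsSquare (-1 : F) := by
  have hsq := neg_eq_sq_of_two_torsion_root h2 hroot
  have hu : (x - t) / 2 ≠ 0 := fun hu => hx (by simpa [hu] using hsq)
  calc IsSquare x ↔ IsSquare (-1 * ((x - t) / 2) ^ 2) := by rw [← hsq, neg_one_mul, neg_neg]
    _ ↔ IsSquare (-1) := isSquare_mul_sq_iff hu

theorem ZMod.isSquare_neg_one_iff_mod_four_eq_one {p : ℕ} [Fact p.Prime] (hodd : p % 2 = 1) :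
    IsSquare (-1 : ZMod p) ↔ p % 4 = 1 := by
  rw [ZMod.exists_sq_eq_neg_one_iff]
  omega

theorem two_torsion_x_square_general (p : ℕ) (hp : p.Prime) (hodd : p % 2 = 1)
    (t : ZMod p)
    (x₀ : ZMod p) (hx₀ : x₀ ≠ 0)
    (hroot : x₀ ^ 2 + (4 - 2 * t) * x₀ + t ^ 2 = 0) :
    IsSquare x₀ ↔ p % 4 = 1 := by
  have : Fact p.Prime := ⟨hp⟩
  have h2 : (2 : ZMod p) ≠ 0 := Ring.two_ne_zero (by rw [ZMod.ringChar_zmod_n]; omega)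
  rw [isSquare_iff_isSquare_neg_one_of_two_torsion_root h2 hx₀ hroot,
    ZMod.isSquare_neg_one_iff_mod_four_eq_one hodd]

/-- If `E_t : y² = x³ - 2(t-2)x² + t²x` has full 2-torsion over `F_p`, i.e. the quadratic
`x² + (4-2t)x + t² = 0` has a root `x₀ ∈ F_p` (the `x`-coordinate of a 2-torsion point
`T ≠ (0,0)`), then `x₀` is a square iff `p ≡ 1 (mod 4)`. -/
theorem two_torsion_x_square (p : ℕ) (hp : p.Prime) (hodd : p % 2 = 1)
    (t : ZMod p) (ht0 : t ≠ 0) (ht1 : t ≠ 1)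
    (x₀ : ZMod p) (hx₀ : x₀ ≠ 0)
    (hroot : x₀ ^ 2 + (4 - 2 * t) * x₀ + t ^ 2 = 0) :
    IsSquare x₀ ↔ p % 4 = 1 :=
  two_torsion_x_square_general p hp hodd t x₀ hx₀ hroot
end

section
/- Let p be an odd prime and χ the quadratic character of F_p. Then the sum S_4 = Σ χ(ab+1)χ(ac+1)χ(bc+1), taken over all triples (a,b,c) of distinct nonzero elements of F_p, equals 6p - 18. -/
/-!
Sum out `c`, then `b`, then `a`, each time over the whole field and subtracting the excluded
values by hand. Over all of `F`, the sum in `c` of `χ(ac+1)χ(bc+1)` becomes, after an affine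
change of variable, `χ(ab)χ(-1)` times the Jacobi sum `J(χ, χ) = -χ(-1)`, so equals `-χ(ab)`.
In the sum over `b`, `χ(ab+1)² = 1` except at `b = -1/a`, which leaves `4 + (7 - q) χ(a² + 1)`;
finally `∑ χ(a² + 1) = -1` because `x ↦ x²` hits `t` exactly `1 + χ(t)` times.
-/

open Finset

theorem Fintype.sum_comp_mul_add {F M : Type*} [Field F] [Fintype F] [AddCommMonoid M]
    {a : F} (ha : a ≠ 0) (b : F) (f : F → M) : ∑ x, f (a * x + b) = ∑ x, f x :=
  ((Equiv.mulLeft₀ a ha).trans (Equiv.addRight b)).sum_comp f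

theorem Finset.sum_compl_eq_sum_ite {α M : Type*} [Fintype α] [DecidableEq α] [AddCommMonoid M]
    (s : Finset α) (g : α → M) : ∑ x ∈ sᶜ, g x = ∑ x, if x ∈ s then 0 else g x := by
  rw [← Fintype.sum_ite_mem]
  simp only [mem_compl, ite_not]

theorem sum_ite_distinct_nonzero {α M : Type*} [Fintype α] [DecidableEq α] [Zero α]
    [AddCommMonoid M] (f : α → α → α → M) :
    (∑ a, ∑ b, ∑ c,
      if a ≠ 0 ∧ b ≠ 0 ∧ c ≠ 0 ∧ a ≠ b ∧ a ≠ c ∧ b ≠ c then f a b c else 0) =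
      ∑ a ∈ {0}ᶜ, ∑ b ∈ {0, a}ᶜ, ∑ c ∈ {0, a, b}ᶜ, f a b c := by
  have ite_sum (p : Prop) [Decidable p] (g : α → M) :
      (if p then 0 else ∑ x, g x) = ∑ x, if p then 0 else g x := by
    split_ifs <;> simp
  simp only [sum_compl_eq_sum_ite, ite_sum]
  refine Fintype.sum_congr _ _ fun a => Fintype.sum_congr _ _ fun b =>
    Fintype.sum_congr _ _ fun c => ?_
  grind

section

variable {F : Type*} [Field F] [Fintype F] [DecidableEq F]

local notation "χ" => quadraticChar F

theorem quadraticChar_pow_three (x : F) : χ x ^ 3 = χ x := by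
  rcases eq_or_ne x 0 with rfl | hx
  · simp
  · rw [pow_succ, quadraticChar_sq_one hx, one_mul]

theorem quadraticChar_sq_eq_ite (x : F) : χ x ^ 2 = if x = 0 then 0 else 1 := by
  split_ifs with hx
  · simp [hx]
  · exact quadraticChar_sq_one hx

theorem quadraticChar_inv_sq_add_one {a : F} (ha : a ≠ 0) :
    χ (a⁻¹ ^ 2 + 1) = χ (a ^ 2 + 1) := by
  rw [show a⁻¹ ^ 2 + 1 = a⁻¹ ^ 2 * (a ^ 2 + 1) by field_simp; ring, map_mul,
    quadraticChar_sq_one' (inv_ne_zero ha), one_mul]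

theorem quadraticChar_sum_mul_add (hF : ringChar F ≠ 2) {a : F} (ha : a ≠ 0) (b : F) :
    ∑ x, χ (a * x + b) = 0 := by
  rw [Fintype.sum_comp_mul_add ha b (χ ·), quadraticChar_sum_zero hF]

theorem quadraticChar_sum_add_mul_add (hF : ringChar F ≠ 2) {u v : F} (huv : u ≠ v) :
    ∑ x, χ (x + u) * χ (x + v) = -1 := by
  have hJ : jacobiSum χ χ = -χ (-1) := by
    simpa only [(quadraticChar_isQuadratic F).inv] using
      jacobiSum_nontrivial_inv (quadraticChar_ne_one hF)
  rw [← Fintype.sum_comp_mul_add (sub_ne_zero.2 huv) (-u)]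
  calc ∑ y, χ ((u - v) * y + -u + u) * χ ((u - v) * y + -u + v)
      = ∑ y, χ (-1) * (χ y * χ (1 - y)) := by
        refine sum_congr rfl fun y _ => ?_
        rw [neg_add_cancel_right, show (u - v) * y + -u + v = -1 * (u - v) * (1 - y) by ring,
          map_mul, map_mul, map_mul]
        linear_combination (χ (-1) * χ y * χ (1 - y)) * quadraticChar_sq_one (sub_ne_zero.2 huv)
    _ = -1 := by
        rw [← mul_sum, ← jacobiSum, hJ, mul_neg, ← sq,
          quadraticChar_sq_one (neg_ne_zero.2 one_ne_zero)]

theorem quadraticChar_sum_mul_add_one_mul_mul_add_one (hF : ringChar F ≠ 2) {a b : F}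
    (ha : a ≠ 0) (hb : b ≠ 0) (hab : a ≠ b) :
    ∑ c, χ (a * c + 1) * χ (b * c + 1) = -χ (a * b) := by
  have factor (c : F) :
      χ (a * c + 1) * χ (b * c + 1) = χ (a * b) * (χ (c + a⁻¹) * χ (c + b⁻¹)) := by
    rw [show a * c + 1 = a * (c + a⁻¹) by field_simp,
      show b * c + 1 = b * (c + b⁻¹) by field_simp]
    simp only [map_mul]
    ring
  rw [sum_congr rfl fun c _ => factor c, ← mul_sum,
    quadraticChar_sum_add_mul_add hF (inv_injective.ne hab), mul_neg_one]

theorem sum_comp_sq_eq_sum_quadraticChar (hF : ringChar F ≠ 2) (f : F → ℤ) :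
    ∑ x, f (x ^ 2) = ∑ t, (χ t + 1) * f t := by
  rw [← sum_fiberwise' univ (· ^ 2) f]
  refine sum_congr rfl fun t _ => ?_
  rw [sum_const, nsmul_eq_mul, ← quadraticChar_card_sqrts hF t]
  congr
  ext; simp

theorem quadraticChar_sum_sq_add_one (hF : ringChar F ≠ 2) : ∑ x, χ (x ^ 2 + 1) = -1 := by
  have hshift := quadraticChar_sum_add_mul_add hF (zero_ne_one' F)
  rw [sum_comp_sq_eq_sum_quadraticChar hF (fun t => χ (t + 1))]
  simp only [add_zero] at hshift
  simp only [add_mul, one_mul, sum_add_distrib, hshift]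
  simpa using quadraticChar_sum_mul_add hF one_ne_zero 1

theorem sum_quadraticChar_mul_add_one_sq_mul {a : F} (ha : a ≠ 0) (g : F → ℤ) :
    ∑ b, χ (a * b + 1) ^ 2 * g b = ∑ b, g b - g (-a⁻¹) := by
  have hzero (b : F) : a * b + 1 = 0 ↔ b = -a⁻¹ := by grind
  simp only [quadraticChar_sq_eq_ite, hzero, ite_mul, zero_mul, one_mul]
  rw [Fintype.sum_eq_add_sum_compl (-a⁻¹) g, add_sub_cancel_left, sum_compl_eq_sum_ite]
  simp only [mem_singleton]

theorem quadraticChar_sum_compl_mul_add_one_mul_mul_add_one (hF : ringChar F ≠ 2) {a b : F}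
    (ha : a ≠ 0) (hb : b ≠ 0) (hab : a ≠ b) :
    ∑ c ∈ {0, a, b}ᶜ, χ (a * c + 1) * χ (b * c + 1) =
      -χ (a * b) - 1 - χ (a ^ 2 + 1) * χ (a * b + 1) - χ (a * b + 1) * χ (b ^ 2 + 1) := by
  rw [compl_eq_univ_sdiff, sum_sdiff_eq_sub (subset_univ _),
    sum_insert (by simp [ha.symm, hb.symm]), sum_pair hab,
    quadraticChar_sum_mul_add_one_mul_mul_add_one hF ha hb hab]
  simp only [mul_zero, zero_add, map_one, mul_one, sq, mul_comm b a]
  ring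

theorem quadraticChar_sum_compl_mul_add_one_mul (hF : ringChar F ≠ 2) {a : F} (ha : a ≠ 0) :
    ∑ b ∈ {0, a}ᶜ, χ (a * b + 1) *
        (-χ (a * b) - 1 - χ (a ^ 2 + 1) * χ (a * b + 1) - χ (a * b + 1) * χ (b ^ 2 + 1)) =
      4 + (7 - Fintype.card F) * χ (a ^ 2 + 1) := by
  have hχχ : ∑ b, χ (a * b) * χ (a * b + 1) = -1 := by
    have := quadraticChar_sum_add_mul_add hF (zero_ne_one' F)
    rw [← Fintype.sum_comp_mul_add ha 0] at this
    simpa only [add_zero] using this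
  have hsq : ∑ b, χ (a * b + 1) ^ 2 * (χ (a ^ 2 + 1) + χ (b ^ 2 + 1)) =
      (Fintype.card F - 2) * χ (a ^ 2 + 1) - 1 := by
    rw [sum_quadraticChar_mul_add_one_sq_mul ha, sum_add_distrib, sum_const, card_univ,
      quadraticChar_sum_sq_add_one hF, neg_sq, quadraticChar_inv_sq_add_one ha, nsmul_eq_mul]
    ring
  have hfull : ∑ b, χ (a * b + 1) *
        (-χ (a * b) - 1 - χ (a ^ 2 + 1) * χ (a * b + 1) - χ (a * b + 1) * χ (b ^ 2 + 1)) =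
      2 - (Fintype.card F - 2) * χ (a ^ 2 + 1) := by
    have expand (b : F) : χ (a * b + 1) *
        (-χ (a * b) - 1 - χ (a ^ 2 + 1) * χ (a * b + 1) - χ (a * b + 1) * χ (b ^ 2 + 1)) =
        -(χ (a * b) * χ (a * b + 1)) - χ (a * b + 1) -
          χ (a * b + 1) ^ 2 * (χ (a ^ 2 + 1) + χ (b ^ 2 + 1)) := by ring
    rw [sum_congr rfl fun b _ => expand b, sum_sub_distrib, sum_sub_distrib, sum_neg_distrib,
      hχχ, quadraticChar_sum_mul_add hF ha 1, hsq]
    ring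
  rw [compl_eq_univ_sdiff, sum_sdiff_eq_sub (subset_univ _), sum_pair (Ne.symm ha), hfull]
  simp only [mul_zero, zero_add, map_one, quadraticChar_zero, ne_eq, OfNat.ofNat_ne_zero,
    not_false_eq_true, zero_pow, ← sq, quadraticChar_sq_one' ha]
  linear_combination 2 * quadraticChar_pow_three (a ^ 2 + 1)

theorem sum_compl_zero_quadraticChar_sq_add_one (hF : ringChar F ≠ 2) :
    ∑ a ∈ {0}ᶜ, (4 + (7 - Fintype.card F) * χ (a ^ 2 + 1)) =
      6 * (Fintype.card F : ℤ) - 18 := by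
  rw [compl_eq_univ_sdiff, sum_sdiff_eq_sub (subset_univ _), sum_singleton, sum_add_distrib,
    ← mul_sum, quadraticChar_sum_sq_add_one hF, sum_const, card_univ, nsmul_eq_mul]
  simp only [ne_eq, OfNat.ofNat_ne_zero, not_false_eq_true, zero_pow, zero_add, map_one]
  ring

theorem quadraticChar_sum_distinct_nonzero (hF : ringChar F ≠ 2) :
    (∑ a : F, ∑ b : F, ∑ c : F,
      if a ≠ 0 ∧ b ≠ 0 ∧ c ≠ 0 ∧ a ≠ b ∧ a ≠ c ∧ b ≠ c then
        χ (a * b + 1) * χ (a * c + 1) * χ (b * c + 1)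
      else 0) = 6 * (Fintype.card F : ℤ) - 18 := by
  rw [sum_ite_distinct_nonzero, ← sum_compl_zero_quadraticChar_sq_add_one hF]
  refine sum_congr rfl fun a ha => ?_
  have ha : a ≠ 0 := by simpa using ha
  rw [← quadraticChar_sum_compl_mul_add_one_mul hF ha]
  refine sum_congr rfl fun b hb => ?_
  obtain ⟨hb, hba⟩ : b ≠ 0 ∧ b ≠ a := by simpa [not_or] using hb
  rw [← quadraticChar_sum_compl_mul_add_one_mul_mul_add_one hF ha hb (Ne.symm hba), mul_sum]
  simp only [mul_assoc]

end

theorem S4_sum (p : ℕ) [Fact p.Prime] (hodd : p % 2 = 1) :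
    (∑ a : ZMod p, ∑ b : ZMod p, ∑ c : ZMod p,
      if a ≠ 0 ∧ b ≠ 0 ∧ c ≠ 0 ∧ a ≠ b ∧ a ≠ c ∧ b ≠ c then
        quadraticChar (ZMod p) (a * b + 1) * quadraticChar (ZMod p) (a * c + 1) *
          quadraticChar (ZMod p) (b * c + 1)
      else 0) = 6 * (p : ℤ) - 18 := by
  have hF : ringChar (ZMod p) ≠ 2 := by
    rw [ZMod.ringChar_zmod_n]
    omega
  simpa only [ZMod.card] using quadraticChar_sum_distinct_nonzero hF
end

section
/- Let p be an odd prime and χ the quadratic character of F_p. Then Σ χ(ab+1), summed over all ordered pairs (a,b) of distinct nonzero elements of F_p, equals -(p-3). -/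
/-!
For `a ≠ 0` the map `b ↦ a * b + 1` permutes `F`, so the inner sum over `b ∉ {0, a}` is
`0 - χ 1 - χ (a ^ 2 + 1)`. It remains to see `∑ a, χ (a ^ 2 + 1) = -1`: counting square roots
turns it into `∑ t, (1 + χ t) * χ (t + 1) = ∑ t, χ t * χ (t + 1)`, which is `χ (-1)` times the
Jacobi sum `J(χ, χ) = J(χ, χ⁻¹) = -χ (-1)`.
-/

open Finset

variable {F : Type*} [Field F] [Fintype F] [DecidableEq F]

theorem sum_quadraticChar_mul_quadraticChar_add_one (hF : ringChar F ≠ 2) :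
    ∑ t : F, quadraticChar F t * quadraticChar F (t + 1) = -1 := by
  set χ := quadraticChar F
  have hJ : jacobiSum χ χ = -χ (-1) := by
    rw [← jacobiSum_nontrivial_inv (quadraticChar_ne_one hF), (quadraticChar_isQuadratic F).inv]
  calc ∑ t : F, χ t * χ (t + 1)
      = ∑ x : F, χ (-x) * χ (-x + 1) := (Equiv.sum_comp (Equiv.neg F) fun t ↦ χ t * χ (t + 1)).symm
    _ = χ (-1) * jacobiSum χ χ := by
        rw [jacobiSum, mul_sum]
        refine sum_congr rfl fun x _ ↦ ?_
        rw [neg_eq_neg_one_mul x, map_mul, neg_one_mul, neg_add_eq_sub, mul_assoc]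
    _ = -1 := by rw [hJ, mul_neg, ← sq, quadraticChar_sq_one (neg_ne_zero.2 one_ne_zero)]

theorem sum_quadraticChar_sq_add_one (hF : ringChar F ≠ 2) :
    ∑ a : F, quadraticChar F (a ^ 2 + 1) = -1 := by
  set χ := quadraticChar F
  have hshift : ∑ t : F, χ (t + 1) = 0 :=
    (Equiv.sum_comp (Equiv.addRight 1) χ).trans (quadraticChar_sum_zero hF)
  calc ∑ a : F, χ (a ^ 2 + 1)
      = ∑ t : F, ∑ a with a ^ 2 = t, χ (t + 1) := by
        rw [← sum_fiberwise univ (· ^ 2) (fun a ↦ χ (a ^ 2 + 1))]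
        exact sum_congr rfl fun t _ ↦ sum_congr rfl fun a ha ↦ by rw [(mem_filter.1 ha).2]
    _ = ∑ t : F, (χ t + 1) * χ (t + 1) := by
        refine sum_congr rfl fun t _ ↦ ?_
        rw [sum_const, ← quadraticChar_card_sqrts hF t, Set.toFinset_ofPred, nsmul_eq_mul]
    _ = -1 := by
        rw [← sum_quadraticChar_mul_quadraticChar_add_one hF]
        simp only [add_mul, one_mul, sum_add_distrib, hshift, add_zero, χ]

theorem sum_quadraticChar_mul_add_one (hF : ringChar F ≠ 2) {a : F} (ha : a ≠ 0) :
    ∑ b : F, quadraticChar F (a * b + 1) = 0 :=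
  (Equiv.sum_comp ((Equiv.mulLeft₀ a ha).trans (Equiv.addRight 1)) _).trans
    (quadraticChar_sum_zero hF)

theorem sum_erase_erase_quadraticChar_mul_add_one (hF : ringChar F ≠ 2) {a : F} (ha : a ≠ 0) :
    ∑ b ∈ (univ.erase 0).erase a, quadraticChar F (a * b + 1) =
      -1 - quadraticChar F (a ^ 2 + 1) := by
  rw [sum_erase_eq_sub (mem_erase.2 ⟨ha, mem_univ a⟩), sum_erase_eq_sub (mem_univ 0),
    sum_quadraticChar_mul_add_one hF ha, mul_zero, zero_add, map_one, sq]
  ring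

theorem sum_distinct_nonzero_quadraticChar_mul_add_one (hF : ringChar F ≠ 2) :
    (∑ a ∈ univ.erase (0 : F), ∑ b ∈ (univ.erase 0).erase a, quadraticChar F (a * b + 1)) =
      -((Fintype.card F : ℤ) - 3) := by
  rw [sum_congr rfl fun a ha ↦ sum_erase_erase_quadraticChar_mul_add_one hF (ne_of_mem_erase ha),
    sum_sub_distrib, sum_erase_eq_sub (f := fun a : F ↦ quadraticChar F (a ^ 2 + 1)) (mem_univ 0),
    sum_quadraticChar_sq_add_one hF, sum_const, card_erase_of_mem (mem_univ 0), card_univ,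
    nsmul_eq_mul, Nat.cast_pred Fintype.card_pos, zero_pow two_ne_zero, zero_add, map_one]
  ring

theorem S2_sum (p : ℕ) [Fact p.Prime] (hodd : p % 2 = 1) :
    (∑ a : ZMod p, ∑ b : ZMod p,
      if a ≠ 0 ∧ b ≠ 0 ∧ a ≠ b then quadraticChar (ZMod p) (a * b + 1) else 0) =
      -((p : ℤ) - 3) := by
  have hF : ringChar (ZMod p) ≠ 2 := by
    rw [ZMod.ringChar_zmod_n]; omega
  have hsum := sum_distinct_nonzero_quadraticChar_mul_add_one hF
  rw [ZMod.card] at hsum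
  rw [← hsum, ← sum_erase univ (a := 0) (by simp)]
  refine sum_congr rfl fun a ha ↦ ?_
  rw [← sum_filter]
  congr 1
  ext b
  simp [ne_of_mem_erase ha, and_comm, eq_comm]
end

section
/- Let p be an odd prime and t ∈ F_p, t ≠ 0, 1. The map sending (x,y) to (U,V) with U = 2(x^2-1)y + 2x^2 - (2-t) and V = 2Ux gives a bijection between the affine F_p-points of the curve D_t: (x^2-1)(y^2-1) = t and the set E_t(F_p) \ {O, R, 2R, 3R}, where E_t: V^2 = U^3 - 2(t-2)U^2 + t^2 U and R = (t,2t). -/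
/-!
For `(x, y)` on `D_t` put `U = 2(x² - 1)y + 2x² - (2 - t)`. Then `U - t = 2(x² - 1)(y + 1)` and,
using the equation of `D_t`, `U = (x² - 1)(y + 1)²`; both are nonzero since `t ≠ 0` and `2 ≠ 0`.
The equation of `E_t` reads `V² = U(U - t)² + 4U²`, so for `U ≠ 0` and `x = V / (2U)` it becomes
`(U - t)² = 4U(x² - 1)`. This identity lets one invert the map by `x = V / (2U)`,
`y + 1 = (U - t) / (2(x² - 1))`, and the affine points where this breaks down (`U = 0` or
`x² = 1`) are exactly `2R = (0, 0)` and `R, 3R = (t, ±2t)`.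
-/

namespace CurveCorrespondence

variable {K : Type*} [Field K] (t : K)

def curveD : Set (K × K) := {P | (P.1 ^ 2 - 1) * (P.2 ^ 2 - 1) = t}

def curveE : Set (K × K) := {Q | Q.2 ^ 2 = Q.1 ^ 3 - 2 * (t - 2) * Q.1 ^ 2 + t ^ 2 * Q.1}

/-- The affine points `R, 2R, 3R` of the subgroup generated by `R = (t, 2t)`. -/
def multiplesR : Set (K × K) := {(t, 2 * t), (0, 0), (t, -(2 * t))}

def toE (P : K × K) : K × K :=
  (2 * (P.1 ^ 2 - 1) * P.2 + 2 * P.1 ^ 2 - (2 - t),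
    2 * (2 * (P.1 ^ 2 - 1) * P.2 + 2 * P.1 ^ 2 - (2 - t)) * P.1)

def toD (Q : K × K) : K × K :=
  (Q.2 / (2 * Q.1), (Q.1 - t) / (2 * ((Q.2 / (2 * Q.1)) ^ 2 - 1)) - 1)

variable {t}

lemma toE_snd (P : K × K) : (toE t P).2 = 2 * (toE t P).1 * P.1 := rfl

lemma toE_fst_sub (P : K × K) : (toE t P).1 - t = 2 * (P.1 ^ 2 - 1) * (P.2 + 1) := by
  simp only [toE]; ring

lemma toE_fst_of_mem_curveD {P : K × K} (hP : P ∈ curveD t) :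
    (toE t P).1 = (P.1 ^ 2 - 1) * (P.2 + 1) ^ 2 := by
  simp only [curveD, Set.mem_ofPred_eq] at hP
  simp only [toE]
  linear_combination -hP

lemma sq_sub_one_ne_zero_of_mem_curveD (ht : t ≠ 0) {P : K × K} (hP : P ∈ curveD t) :
    P.1 ^ 2 - 1 ≠ 0 := by
  intro h
  apply ht
  rw [← hP.out, h, zero_mul]

lemma add_one_ne_zero_of_mem_curveD (ht : t ≠ 0) {P : K × K} (hP : P ∈ curveD t) :
    P.2 + 1 ≠ 0 := by
  intro h
  apply ht
  rw [← hP.out]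
  linear_combination (P.1 ^ 2 - 1) * (P.2 - 1) * h

lemma mem_curveE_iff {Q : K × K} :
    Q ∈ curveE t ↔ Q.2 ^ 2 = Q.1 * (Q.1 - t) ^ 2 + 4 * Q.1 ^ 2 := by
  simp only [curveE, Set.mem_ofPred_eq]
  constructor <;> intro h <;> linear_combination h

lemma mapsTo_toE (h2 : (2 : K) ≠ 0) (ht : t ≠ 0) :
    Set.MapsTo (toE t) (curveD t) (curveE t \ multiplesR t) := by
  intro P hP
  have hx := sq_sub_one_ne_zero_of_mem_curveD ht hP
  have hy := add_one_ne_zero_of_mem_curveD ht hP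
  have hU : (toE t P).1 = (P.1 ^ 2 - 1) * (P.2 + 1) ^ 2 := toE_fst_of_mem_curveD hP
  have hU0 : (toE t P).1 ≠ 0 := by rw [hU]; exact mul_ne_zero hx (pow_ne_zero 2 hy)
  have hUt : (toE t P).1 - t ≠ 0 := by
    rw [toE_fst_sub]; exact mul_ne_zero (mul_ne_zero h2 hx) hy
  refine ⟨?_, ?_⟩
  · rw [mem_curveE_iff, toE_snd, toE_fst_sub, hU]
    ring
  · simp only [multiplesR, Set.mem_insert_iff, Set.mem_singleton_iff, Prod.ext_iff, not_or]
    exact ⟨fun h => hUt (sub_eq_zero.2 h.1), fun h => hU0 h.1, fun h => hUt (sub_eq_zero.2 h.1)⟩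

lemma fst_ne_zero_of_mem_curveE_diff {Q : K × K} (hQ : Q ∈ curveE t \ multiplesR t) :
    Q.1 ≠ 0 := by
  obtain ⟨hE, hR⟩ := hQ
  intro hU
  rw [mem_curveE_iff, hU] at hE
  exact hR (Or.inr (Or.inl (Prod.ext hU (pow_eq_zero_iff two_ne_zero |>.1 (by simpa using hE)))))

lemma sub_sq_of_mem_curveE (h2 : (2 : K) ≠ 0) {Q : K × K} (hQ : Q ∈ curveE t) (hU : Q.1 ≠ 0) :
    (Q.1 - t) ^ 2 = 4 * Q.1 * ((Q.2 / (2 * Q.1)) ^ 2 - 1) := by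
  have hV : Q.2 = 2 * Q.1 * (Q.2 / (2 * Q.1)) := (mul_div_cancel₀ _ (mul_ne_zero h2 hU)).symm
  rw [mem_curveE_iff, hV] at hQ
  refine mul_left_cancel₀ hU ?_
  linear_combination -hQ

lemma slope_sq_sub_one_ne_zero (h2 : (2 : K) ≠ 0) {Q : K × K}
    (hQ : Q ∈ curveE t \ multiplesR t) : (Q.2 / (2 * Q.1)) ^ 2 - 1 ≠ 0 := by
  obtain ⟨hE, hR⟩ := hQ
  have hU := fst_ne_zero_of_mem_curveE_diff ⟨hE, hR⟩
  intro hx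
  have hUt : Q.1 = t := by
    have := sub_sq_of_mem_curveE h2 hE hU
    rw [hx, mul_zero] at this
    exact sub_eq_zero.1 (pow_eq_zero_iff two_ne_zero |>.1 this)
  have hV : (Q.2 - 2 * t) * (Q.2 + 2 * t) = 0 := by
    rw [mem_curveE_iff, hUt] at hE
    linear_combination hE
  rcases mul_eq_zero.1 hV with hV | hV
  · exact hR (Or.inl (Prod.ext hUt (sub_eq_zero.1 hV)))
  · exact hR (Or.inr (Or.inr (Prod.ext hUt (eq_neg_of_add_eq_zero_left hV))))

lemma leftInvOn_toD_toE (h2 : (2 : K) ≠ 0) (ht : t ≠ 0) :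
    Set.LeftInvOn (toD t) (toE t) (curveD t) := by
  intro P hP
  have hx := sq_sub_one_ne_zero_of_mem_curveD ht hP
  have hU0 : (toE t P).1 ≠ 0 := by
    rw [toE_fst_of_mem_curveD hP]
    exact mul_ne_zero hx (pow_ne_zero 2 (add_one_ne_zero_of_mem_curveD ht hP))
  have hxP : (toE t P).2 / (2 * (toE t P).1) = P.1 := by
    rw [toE_snd, mul_div_cancel_left₀ _ (mul_ne_zero h2 hU0)]
  ext
  · exact hxP
  · simp only [toD, hxP, toE_fst_sub]
    field_simp
    ring

lemma rightInvOn_toD_toE (h2 : (2 : K) ≠ 0) :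
    Set.RightInvOn (toD t) (toE t) (curveE t \ multiplesR t) := by
  intro Q hQ
  have hU := fst_ne_zero_of_mem_curveE_diff hQ
  have hx := slope_sq_sub_one_ne_zero h2 hQ
  have hfst : (toE t (toD t Q)).1 = Q.1 := by
    rw [← sub_left_inj (a := t), toE_fst_sub]
    simp only [toD, sub_add_cancel]
    exact mul_div_cancel₀ _ (mul_ne_zero h2 hx)
  ext
  · exact hfst
  · rw [toE_snd, hfst]
    exact mul_div_cancel₀ _ (mul_ne_zero h2 hU)

lemma mapsTo_toD (h2 : (2 : K) ≠ 0) :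
    Set.MapsTo (toD t) (curveE t \ multiplesR t) (curveD t) := by
  intro Q hQ
  have hU := fst_ne_zero_of_mem_curveE_diff hQ
  have hx := slope_sq_sub_one_ne_zero h2 hQ
  have hkey := sub_sq_of_mem_curveE h2 hQ.1 hU
  simp only [curveD, Set.mem_ofPred_eq, toD]
  generalize Q.2 / (2 * Q.1) = x at hx hkey ⊢
  field_simp
  linear_combination hkey

theorem bijOn_toE (h2 : (2 : K) ≠ 0) (ht : t ≠ 0) :
    Set.BijOn (toE t) (curveD t) (curveE t \ multiplesR t) :=
  Set.InvOn.bijOn ⟨leftInvOn_toD_toE h2 ht, rightInvOn_toD_toE h2⟩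
    (mapsTo_toE h2 ht) (mapsTo_toD h2)

end CurveCorrespondence

theorem correspondence_bijection_general (p : ℕ) [Fact p.Prime] (hodd : p % 2 = 1)
    (t : ZMod p) (ht0 : t ≠ 0) :
    Set.BijOn
      (fun P : ZMod p × ZMod p =>
        ((2 * (P.1 ^ 2 - 1) * P.2 + 2 * P.1 ^ 2 - (2 - t)),
          2 * (2 * (P.1 ^ 2 - 1) * P.2 + 2 * P.1 ^ 2 - (2 - t)) * P.1))
      {P : ZMod p × ZMod p | (P.1 ^ 2 - 1) * (P.2 ^ 2 - 1) = t}
      ({Q : ZMod p × ZMod p |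
          Q.2 ^ 2 = Q.1 ^ 3 - 2 * (t - 2) * Q.1 ^ 2 + t ^ 2 * Q.1} \
        {(t, 2 * t), (0, 0), (t, -(2 * t))}) := by
  have h2 : (2 : ZMod p) ≠ 0 := by
    intro h
    have hdvd : p ∣ 2 := (ZMod.natCast_eq_zero_iff 2 p).1 (by exact_mod_cast h)
    have := Nat.le_of_dvd two_pos hdvd
    have := (Fact.out : p.Prime).two_le
    omega
  exact CurveCorrespondence.bijOn_toE h2 ht0

/-- The map `(x,y) ↦ (U, 2Ux)` with `U = 2(x²-1)y + 2x² - (2-t)` is a bijection between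
the affine `F_p`-points of `D_t : (x²-1)(y²-1) = t` and the affine points of
`E_t : V² = U³ - 2(t-2)U² + t²U` other than `R = (t,2t)`, `2R = (0,0)`, `3R = (t,-2t)`
(the identity `O` being the point at infinity). -/
theorem correspondence_bijection (p : ℕ) [Fact p.Prime] (hodd : p % 2 = 1)
    (t : ZMod p) (ht0 : t ≠ 0) (ht1 : t ≠ 1) :
    Set.BijOn
      (fun P : ZMod p × ZMod p =>
        ((2 * (P.1 ^ 2 - 1) * P.2 + 2 * P.1 ^ 2 - (2 - t)),
          2 * (2 * (P.1 ^ 2 - 1) * P.2 + 2 * P.1 ^ 2 - (2 - t)) * P.1))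
      {P : ZMod p × ZMod p | (P.1 ^ 2 - 1) * (P.2 ^ 2 - 1) = t}
      ({Q : ZMod p × ZMod p |
          Q.2 ^ 2 = Q.1 ^ 3 - 2 * (t - 2) * Q.1 ^ 2 + t ^ 2 * Q.1} \
        {(t, 2 * t), (0, 0), (t, -(2 * t))}) :=
  correspondence_bijection_general p hodd t ht0
end

section
/- Let p be an odd prime with p ≡ 3 (mod 4). Then the number of t ∈ F_p \ {0,1} such that 1 - t is a nonzero square in F_p and t is a square in F_p equals half the number of t ∈ F_p \ {0,1} such that 1 - t is a nonzero square in F_p. -/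
/-!
The map `σ t = t / (t - 1) = -t (1 - t)⁻¹` is an involution with `1 - σ t = (1 - t)⁻¹`, so it
preserves the set of `t ≠ 0, 1` with `1 - t` a nonzero square. On that set `σ t` differs from
`-t` by the nonzero square `(1 - t)⁻¹`; as `-1` is not a square when `p ≡ 3 (mod 4)`, `σ t` is a
square exactly when `t` is not. Thus `σ` swaps the squares and the nonsquares of the set.
-/

open Finset

theorem Finset.two_mul_card_filter_eq_card_of_involution {α : Type*} (s : Finset α)
    (P : α → Prop) [DecidablePred P] (σ : α → α) (hσs : ∀ x ∈ s, σ x ∈ s)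
    (hσσ : ∀ x ∈ s, σ (σ x) = x) (hP : ∀ x ∈ s, P (σ x) ↔ ¬ P x) :
    2 * #(s.filter P) = #s := by
  have hmaps {Q R : α → Prop} [DecidablePred Q] [DecidablePred R] (hQR : ∀ x ∈ s, Q x → R (σ x)) :
      Set.MapsTo σ (s.filter Q) (s.filter R) := fun x hx => by
    rw [mem_coe, mem_filter] at hx ⊢
    exact ⟨hσs x hx.1, hQR x hx.1 hx.2⟩
  have hswap : #(s.filter (¬ P ·)) = #(s.filter P) :=
    card_nbij' σ σ (hmaps fun x hx => (hP x hx).mpr) (hmaps fun x hx hPx => by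
        rwa [hP x hx, not_not])
      (fun x hx => hσσ x (mem_filter.mp hx).1) (fun x hx => hσσ x (mem_filter.mp hx).1)
  rw [← card_filter_add_card_filter_not (s := s) P, hswap, two_mul]

section DivSubOne

variable {F : Type*} [Field F] {t : F}

theorem div_sub_one_eq_neg_mul_inv (t : F) : t / (t - 1) = -t * (1 - t)⁻¹ := by
  rw [div_eq_mul_inv, ← neg_sub, inv_neg, mul_neg, neg_mul]

theorem one_sub_div_sub_one (ht : t ≠ 1) : 1 - t / (t - 1) = (1 - t)⁻¹ := by
  have : t - 1 ≠ 0 := sub_ne_zero.mpr ht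
  have : 1 - t ≠ 0 := sub_ne_zero.mpr ht.symm
  field_simp
  ring

theorem div_sub_one_ne_one (t : F) : t / (t - 1) ≠ 1 := by
  by_cases ht : t = 1
  · simp [ht]
  · rw [ne_eq, div_eq_one_iff_eq (sub_ne_zero.mpr ht), eq_sub_iff_add_eq, add_eq_left]
    exact one_ne_zero

theorem div_sub_one_div_sub_one (ht : t ≠ 1) : t / (t - 1) / (t / (t - 1) - 1) = t := by
  have : t - 1 ≠ 0 := sub_ne_zero.mpr ht
  field_simp
  ring

end DivSubOne

theorem isSquare_mul_inv_iff {α : Type*} [CommGroupWithZero α] {a c : α} (hc : IsSquare c)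
    (hc0 : c ≠ 0) : IsSquare (a * c⁻¹) ↔ IsSquare a := by
  refine ⟨fun h => ?_, fun h => h.mul hc.inv⟩
  simpa [hc0] using h.mul hc

section FiniteField

variable {F : Type*} [Field F] [Fintype F]

theorem FiniteField.isSquare_neg_iff (hF : ¬ IsSquare (-1 : F)) {a : F} (ha : a ≠ 0) :
    IsSquare (-a) ↔ ¬ IsSquare a := by
  classical
  have hχ : quadraticChar F (-a) = -quadraticChar F a := by
    rw [neg_eq_neg_one_mul, map_mul, quadraticChar_neg_one_iff_not_isSquare.mpr hF, neg_one_mul]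
  rw [← quadraticChar_one_iff_isSquare (neg_ne_zero.mpr ha), hχ,
    ← quadraticChar_neg_one_iff_not_isSquare, neg_eq_iff_eq_neg]

theorem FiniteField.isSquare_div_sub_one_iff (hF : ¬ IsSquare (-1 : F)) {t : F} (ht0 : t ≠ 0)
    (h1t0 : 1 - t ≠ 0) (h1t : IsSquare (1 - t)) : IsSquare (t / (t - 1)) ↔ ¬ IsSquare t := by
  rw [div_sub_one_eq_neg_mul_inv, isSquare_mul_inv_iff h1t h1t0, isSquare_neg_iff hF ht0]

theorem FiniteField.two_mul_card_isSquare_of_isSquare_one_sub [DecidableEq F]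
    (hF : ¬ IsSquare (-1 : F)) :
    2 * #{t : F | t ≠ 0 ∧ t ≠ 1 ∧ 1 - t ≠ 0 ∧ IsSquare (1 - t) ∧ IsSquare t} =
      #{t : F | t ≠ 0 ∧ t ≠ 1 ∧ 1 - t ≠ 0 ∧ IsSquare (1 - t)} := by
  set s : Finset F := {t : F | t ≠ 0 ∧ t ≠ 1 ∧ 1 - t ≠ 0 ∧ IsSquare (1 - t)}
  have hfilter : ({t : F | t ≠ 0 ∧ t ≠ 1 ∧ 1 - t ≠ 0 ∧ IsSquare (1 - t) ∧ IsSquare t} :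
      Finset F) = s.filter IsSquare := by
    simp only [s, filter_filter, and_assoc]
  rw [hfilter]
  refine two_mul_card_filter_eq_card_of_involution s IsSquare (fun t => t / (t - 1)) ?_ ?_ ?_ <;>
    intro t ht <;> obtain ⟨ht0, ht1, h1t0, h1t⟩ := (mem_filter.mp ht).2
  · simp only [s, mem_filter, mem_univ, true_and, one_sub_div_sub_one ht1]
    exact ⟨div_ne_zero ht0 (sub_ne_zero.mpr ht1), div_sub_one_ne_one t, inv_ne_zero h1t0, h1t.inv⟩
  · exact div_sub_one_div_sub_one ht1
  · exact isSquare_div_sub_one_iff hF ht0 h1t0 h1t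

end FiniteField

/-- For `p ≡ 3 (mod 4)`, among `t ∈ F_p \ {0,1}` with `1-t` a nonzero square, exactly half
are themselves squares. -/
theorem half_are_squares (p : ℕ) [Fact p.Prime] (h3 : p % 4 = 3) :
    2 * (Finset.univ.filter fun t : ZMod p =>
        t ≠ 0 ∧ t ≠ 1 ∧ 1 - t ≠ 0 ∧ IsSquare (1 - t) ∧ IsSquare t).card =
      (Finset.univ.filter fun t : ZMod p =>
        t ≠ 0 ∧ t ≠ 1 ∧ 1 - t ≠ 0 ∧ IsSquare (1 - t)).card :=
  FiniteField.two_mul_card_isSquare_of_isSquare_one_sub <| by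
    rw [FiniteField.isSquare_neg_one_iff, ZMod.card]
    exact not_not.mpr h3
end
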